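/- arXiv:1201.6104 — 2 statements merged into one kernel-verified Lean document; each statement's English description precedes it below -/
import Mathlib

section
/- Let G be a countable group with a geometrically finite convergence action on a compact metrizable space X, let {lₖ : k ∈ ℕ} enumerate all loxodromic elements of G with respect to X, and suppose for each n there is a compact metrizable space Xₙ with a geometrically finite convergence action of G whose peripheral structure is 𝓗(X) together with the conjugacy classes of the virtual normalizers of l₁,…,lₙ, with G-equivariant continuous surjections πₙ : Xₙ₋₁ → Xₙ. Then there is no compact metrizable space Y with a non-elementary convergence action of G that is a common blow-down of all Xₙ; i.e., there is no Y receiving a G-equivariant continuous map from every Xₙ. -/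
open Filter Topology Pointwise

section Defs

variable (G : Type) [Group G] (X : Type) [UniformSpace X] [MulAction G X]

/-- `g` is a convergence sequence with repelling point `r` and attracting point `a`:
`g n` converges to `a` uniformly on compact subsets of `X \ {r}`, and `(g n)⁻¹`
converges to `r` uniformly on compact subsets of `X \ {a}`. -/
def IsConvSeq (g : ℕ → G) (r a : X) : Prop :=
  Function.Injective g ∧
  (∀ K : Set X, IsCompact K → r ∉ K →
    TendstoUniformlyOn (fun n x => g n • x) (fun _ => a) atTop K) ∧
  (∀ K : Set X, IsCompact K → a ∉ K →
    TendstoUniformlyOn (fun n x => (g n)⁻¹ • x) (fun _ => r) atTop K)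

/-- The action of `G` on `X` is a convergence action: `X` is infinite, the action is
continuous, and every injective sequence in `G` has a convergence subsequence. -/
def IsConvergenceAction : Prop :=
  Infinite X ∧ (∀ g : G, Continuous fun x : X => g • x) ∧
  ∀ g : ℕ → G, Function.Injective g →
    ∃ (φ : ℕ → ℕ) (r a : X), StrictMono φ ∧ IsConvSeq G X (g ∘ φ) r a

/-- The limit set of a subgroup `H`: all repelling and attracting points of
convergence sequences with entries in `H`. -/
def limitSetOf (H : Subgroup G) : Set X :=
  {p | ∃ (g : ℕ → G) (r a : X), (∀ n, g n ∈ H) ∧ IsConvSeq G X g r a ∧ (p = r ∨ p = a)}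

/-- The limit set of the action of `G` on `X`. -/
def limitSet : Set X := limitSetOf G X ⊤

/-- `p` is a conical limit point: there is a convergence sequence `g` with attracting
point `a` such that `g n • p` converges to a point `b ≠ a`. -/
def IsConicalLimitPoint (p : X) : Prop :=
  ∃ (g : ℕ → G) (r a b : X), IsConvSeq G X g r a ∧
    Tendsto (fun n => g n • p) atTop (nhds b) ∧ b ≠ a

/-- `l` is loxodromic: infinite order with exactly two fixed points. -/
def IsLoxodromic (l : G) : Prop :=
  ¬ IsOfFinOrder l ∧ ∃ x y : X, x ≠ y ∧ {z : X | l • z = z} = {x, y}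

/-- `H` is a parabolic subgroup: infinite, fixes exactly one point, and has no
loxodromic elements. -/
def IsParabolicSubgroup (H : Subgroup G) : Prop :=
  (H : Set G).Infinite ∧ (∃! p : X, ∀ h ∈ H, h • p = p) ∧
  ∀ h ∈ H, ¬ IsLoxodromic G X h

/-- `H` is a maximal parabolic subgroup. -/
def IsMaxParabolic (H : Subgroup G) : Prop :=
  IsParabolicSubgroup G X H ∧
  ∀ H' : Subgroup G, IsParabolicSubgroup G X H' → H ≤ H' → H' = H

/-- The peripheral structure of `X`: the set of maximal parabolic subgroups. -/
def periph : Set (Subgroup G) := {H | IsMaxParabolic G X H}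

/-- `p` is a bounded parabolic point: its maximal parabolic subgroup acts
cocompactly on the complement of `p`. -/
def IsBoundedParabolicPoint (p : X) : Prop :=
  ∃ H : Subgroup G, IsMaxParabolic G X H ∧ (∀ h ∈ H, h • p = p) ∧
    ∃ K : Set X, IsCompact K ∧ K ⊆ {p}ᶜ ∧ (⋃ h ∈ H, (fun x => h • x) '' K) = {p}ᶜ

/-- The action is minimal: every orbit is dense. -/
def IsMinimalAction : Prop := ∀ x : X, Dense {y : X | ∃ g : G, y = g • x}

/-- A minimal non-elementary convergence action. -/
def IsMinimalNonElementary : Prop :=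
  IsConvergenceAction G X ∧ IsMinimalAction G X ∧ (limitSet G X).Infinite

/-- A geometrically finite convergence action: every point is a conical limit point
or a bounded parabolic point. -/
def IsGeomFinite : Prop :=
  IsConvergenceAction G X ∧
  ∀ p : X, IsConicalLimitPoint G X p ∨ IsBoundedParabolicPoint G X p

end Defs

/-- A group is virtually cyclic. -/
def VirtuallyCyclic (K : Type) [Group K] : Prop :=
  ∃ C : Subgroup K, IsCyclic ↥C ∧ C.FiniteIndex

/-- A group admits no non-elementary convergence action on any compact metrizable
space. -/
def NoNonElementaryAction (H : Type) [Group H] : Prop :=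
  ∀ (Z : Type) [MetricSpace Z] [CompactSpace Z] [MulAction H Z],
    IsConvergenceAction H Z → ¬ (limitSet H Z).Infinite

/-- The induced action on an invariant subset. -/
def invariantSubAction {G : Type} [Group G] {X : Type} [MulAction G X] (S : Set X)
    (hS : ∀ (g : G), ∀ x ∈ S, g • x ∈ S) : MulAction G ↥S where
  smul g x := ⟨g • (x : X), hS g x x.2⟩
  one_smul x := Subtype.ext (one_smul G (x : X))
  mul_smul g h x := Subtype.ext (mul_smul g h (x : X))

section ConvLemmas
set_option linter.unusedSectionVars false

variable {G : Type} [Group G] {Y : Type} [MetricSpace Y] [CompactSpace Y] [MulAction G Y]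

lemma tuo_comp {F : ℕ → Y → Y} {f : Y → Y} {K : Set Y}
    (h : TendstoUniformlyOn F f atTop K) {φ : ℕ → ℕ} (hφ : StrictMono φ) :
    TendstoUniformlyOn (fun n => F (φ n)) f atTop K := fun u hu =>
  hφ.tendsto_atTop.eventually (h u hu)

lemma isConvSeq_comp {g : ℕ → G} {r a : Y} (hc : IsConvSeq G Y g r a) {φ : ℕ → ℕ}
    (hφ : StrictMono φ) : IsConvSeq G Y (g ∘ φ) r a :=
  ⟨hc.1.comp hφ.injective, fun K hK hrK => tuo_comp (hc.2.1 K hK hrK) hφ,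
    fun K hK haK => tuo_comp (hc.2.2 K hK haK) hφ⟩

lemma isConvSeq_inv {g : ℕ → G} {r a : Y} (hc : IsConvSeq G Y g r a) :
    IsConvSeq G Y (fun n => (g n)⁻¹) a r := by
  refine ⟨fun i j h => hc.1 (by simpa using congrArg (·⁻¹) h), fun K hK haK => hc.2.2 K hK haK,
    fun K hK hrK => ?_⟩
  have := hc.2.1 K hK hrK
  simpa using this

lemma convSeq_tendsto {g : ℕ → G} {r a : Y} (hc : IsConvSeq G Y g r a) {x : Y}
    (hx : x ≠ r) : Tendsto (fun n => g n • x) atTop (nhds a) :=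
  (hc.2.1 {x} isCompact_singleton (by simpa using fun h => hx h.symm)).tendsto_at rfl

lemma convSeq_tendsto_inv {g : ℕ → G} {r a : Y} (hc : IsConvSeq G Y g r a) {x : Y}
    (hx : x ≠ a) : Tendsto (fun n => (g n)⁻¹ • x) atTop (nhds r) :=
  (hc.2.2 {x} isCompact_singleton (by simpa using fun h => hx h.symm)).tendsto_at rfl

lemma exists_not_mem_of_finite [Infinite Y] {s : Set Y} (hs : s.Finite) : ∃ x : Y, x ∉ s :=
  hs.infinite_compl.nonempty

lemma exists_infinite_fiber {α : Type*} (w : ℕ → α) (hfin : (Set.range w).Finite) :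
    ∃ c, {n | w n = c}.Infinite := by
  by_contra hno
  push_neg at hno
  have hsub : (Set.univ : Set ℕ) ⊆ ⋃ c ∈ Set.range w, {n | w n = c} := by
    intro n _
    exact Set.mem_biUnion ⟨n, rfl⟩ rfl
  exact Set.infinite_univ (Set.Finite.subset (hfin.biUnion fun c _ => hno c) hsub)

lemma exists_injective_comp {α : Type*} (w : ℕ → α) (hw : (Set.range w).Infinite) :
    ∃ ψ : ℕ → ℕ, StrictMono ψ ∧ Function.Injective (w ∘ ψ) := by
  classical
  set p : ℕ → Prop := fun n => ∀ m < n, w m ≠ w n with hp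
  have hinf : (setOf p).Infinite := by
    by_contra hfin
    rw [Set.not_infinite] at hfin
    apply hw
    have : Set.range w ⊆ w '' (setOf p) := by
      rintro v ⟨n, rfl⟩
      have hex : ∃ m, w m = w n := ⟨n, rfl⟩
      refine ⟨Nat.find hex, ?_, Nat.find_spec hex⟩
      intro m hm hne
      exact Nat.find_min hex hm (hne.trans (Nat.find_spec hex))
    exact Set.Finite.subset (hfin.image w) this
  refine ⟨Nat.nth p, Nat.nth_strictMono hinf, ?_⟩
  intro i j hij
  by_contra hne
  rcases Nat.lt_or_ge i j with h | h
  · have hlt : Nat.nth p i < Nat.nth p j := (Nat.nth_strictMono hinf) h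
    exact Nat.nth_mem_of_infinite hinf j _ hlt hij
  · rcases Nat.lt_or_ge j i with h' | h'
    · have hlt : Nat.nth p j < Nat.nth p i := (Nat.nth_strictMono hinf) h'
      exact Nat.nth_mem_of_infinite hinf i _ hlt hij.symm
    · exact hne (le_antisymm h' h)

end ConvLemmas

section ConvLemmas2
set_option linter.unusedSectionVars false

variable {G : Type} [Group G] {Y : Type} [MetricSpace Y] [CompactSpace Y] [MulAction G Y]

lemma att_fixed [Infinite Y] (hcont : ∀ g : G, Continuous fun x : Y => g • x)
    {l : G} {e : ℕ → ℤ} {ρ α : Y} (hc : IsConvSeq G Y (fun i => l ^ e i) ρ α) :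
    l • α = α := by
  obtain ⟨x, hx⟩ : ∃ x : Y, x ∉ ({ρ, l⁻¹ • ρ} : Set Y) :=
    exists_not_mem_of_finite ((Set.finite_singleton _).insert _)
  have hx1 : x ≠ ρ := fun h => hx (by simp [h])
  have hx2 : l • x ≠ ρ := by
    intro h
    exact hx (Or.inr (by rw [← h, inv_smul_smul]; rfl))
  have h1 : Tendsto (fun i => (l ^ e i) • x) atTop (nhds α) := convSeq_tendsto hc hx1
  have h2 : Tendsto (fun i => (l ^ e i) • (l • x)) atTop (nhds α) := convSeq_tendsto hc hx2
  have h3 : (fun i => (l ^ e i) • (l • x)) = fun i => l • ((l ^ e i) • x) := by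
    funext i
    rw [← mul_smul, ← mul_smul, ← zpow_add_one, ← zpow_one_add, add_comm]
  rw [h3] at h2
  exact tendsto_nhds_unique (((hcont l).tendsto α).comp h1) h2

lemma pair_fixed [Infinite Y] (hcont : ∀ g : G, Continuous fun x : Y => g • x)
    {l : G} {e : ℕ → ℤ} {ρ α : Y} (hc : IsConvSeq G Y (fun i => l ^ e i) ρ α) :
    l • ρ = ρ ∧ l • α = α := by
  refine ⟨?_, att_fixed hcont hc⟩
  have hc' : IsConvSeq G Y (fun i => l ^ (-e i)) α ρ := by
    have := isConvSeq_inv hc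
    simpa [zpow_neg] using this
  exact att_fixed hcont hc'

lemma fix_subset_pair {l : G} {e : ℕ → ℤ} {ρ α : Y}
    (hc : IsConvSeq G Y (fun i => l ^ e i) ρ α) :
    {z : Y | l • z = z} ⊆ {ρ, α} := by
  intro z hz
  by_cases h : z = ρ
  · exact Or.inl h
  · have hfix : ∀ i, (l ^ e i) • z = z := by
      intro i
      have hzs : l ∈ MulAction.stabilizer G z := MulAction.mem_stabilizer_iff.2 hz
      exact MulAction.mem_stabilizer_iff.1 (zpow_mem hzs (e i))
    have h1 : Tendsto (fun i => (l ^ e i) • z) atTop (nhds α) := convSeq_tendsto hc h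
    rw [show (fun i => (l ^ e i) • z) = fun _ => z from funext hfix] at h1
    exact Or.inr (tendsto_nhds_unique tendsto_const_nhds h1)

lemma pow_conv (hY : IsConvergenceAction G Y) {l : G} (hl : ¬ IsOfFinOrder l) :
    ∃ (e : ℕ → ℤ) (ρ α : Y), (∀ i, 1 ≤ e i) ∧ StrictMono e ∧
      IsConvSeq G Y (fun i => l ^ e i) ρ α ∧ {z : Y | l • z = z} = {ρ, α} := by
  haveI := hY.1
  have hinj : Function.Injective (fun m : ℕ => l ^ (m + 1)) := by
    intro i j h
    have := (injective_pow_iff_not_isOfFinOrder.mpr hl) h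
    omega
  obtain ⟨φ, ρ, α, hφ, hconv⟩ := hY.2.2 _ hinj
  have hconv' : IsConvSeq G Y (fun i => l ^ ((φ i : ℤ) + 1)) ρ α := by
    have : (fun i => l ^ ((φ i : ℤ) + 1)) = (fun m : ℕ => l ^ (m + 1)) ∘ φ := by
      funext i
      simp [Function.comp]
      rw [show ((φ i : ℤ) + 1) = ((φ i + 1 : ℕ) : ℤ) by push_cast; ring, zpow_natCast]
    rw [this]
    exact hconv
  refine ⟨fun i => (φ i : ℤ) + 1, ρ, α, fun i => by show (1:ℤ) ≤ (φ i : ℤ) + 1; omega, ?_, hconv', ?_⟩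
  · intro i j hij
    have := hφ hij
    show (φ i : ℤ) + 1 < (φ j : ℤ) + 1
    omega
  · refine Set.Subset.antisymm (fix_subset_pair hconv') ?_
    have hp := pair_fixed hY.2.1 hconv'
    rintro z (rfl | rfl)
    · exact hp.1
    · exact hp.2

lemma convSeq_tendsto_moving {g : ℕ → G} {r a : Y} (hc : IsConvSeq G Y g r a)
    {x : ℕ → Y} {xL : Y} (hx : Tendsto x atTop (nhds xL)) (hne : xL ≠ r) :
    Tendsto (fun n => g n • x n) atTop (nhds a) := by
  rw [Metric.tendsto_nhds]
  intro ε hε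
  have hd : 0 < dist xL r := dist_pos.2 hne
  have hK : IsCompact (Metric.closedBall xL (dist xL r / 2)) :=
    Metric.isClosed_closedBall.isCompact
  have hrK : r ∉ Metric.closedBall xL (dist xL r / 2) := by
    simp only [Metric.mem_closedBall]
    rw [dist_comm]
    linarith
  have h1 := (Metric.tendstoUniformlyOn_iff.1 (hc.2.1 _ hK hrK)) ε hε
  have h2 : ∀ᶠ n in atTop, x n ∈ Metric.closedBall xL (dist xL r / 2) :=
    hx (Metric.closedBall_mem_nhds _ (by linarith))
  filter_upwards [h1, h2] with n hn hxn
  have := hn (x n) hxn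
  rwa [dist_comm] at this

lemma tuo_mul {u v : ℕ → G} {b c d : Y} {K : Set Y}
    (hv : TendstoUniformlyOn (fun n x => v n • x) (fun _ => b) atTop K)
    (hu : ∀ K' : Set Y, IsCompact K' → c ∉ K' →
      TendstoUniformlyOn (fun n x => u n • x) (fun _ => d) atTop K')
    (hbc : b ≠ c) :
    TendstoUniformlyOn (fun n x => (u n * v n) • x) (fun _ => d) atTop K := by
  rw [Metric.tendstoUniformlyOn_iff]
  intro ε hε
  have hd : 0 < dist b c := dist_pos.2 hbc
  have hcK : c ∉ Metric.closedBall b (dist b c / 2) := by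
    simp only [Metric.mem_closedBall]
    rw [dist_comm]
    linarith
  have h1 := (Metric.tendstoUniformlyOn_iff.1
    (hu _ Metric.isClosed_closedBall.isCompact hcK)) ε hε
  have h2 := (Metric.tendstoUniformlyOn_iff.1 hv) (dist b c / 2) (by linarith)
  filter_upwards [h1, h2] with n hn1 hn2 x hxK
  have hin : v n • x ∈ Metric.closedBall b (dist b c / 2) := by
    simp only [Metric.mem_closedBall]
    rw [dist_comm]
    exact le_of_lt (hn2 x hxK)
  rw [mul_smul]
  exact hn1 _ hin

lemma conv_comp {u v : ℕ → G} {r₁ a₁ r₂ a₂ : Y}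
    (hu : IsConvSeq G Y u r₁ a₁) (hv : IsConvSeq G Y v r₂ a₂) (hne : a₂ ≠ r₁) :
    (∀ K : Set Y, IsCompact K → r₂ ∉ K →
      TendstoUniformlyOn (fun n x => (u n * v n) • x) (fun _ => a₁) atTop K) ∧
    (∀ K : Set Y, IsCompact K → a₁ ∉ K →
      TendstoUniformlyOn (fun n x => (u n * v n)⁻¹ • x) (fun _ => r₂) atTop K) := by
  constructor
  · intro K hK hr
    exact tuo_mul (hv.2.1 K hK hr) hu.2.1 hne
  · intro K hK ha
    have : (fun n (x : Y) => (u n * v n)⁻¹ • x) = fun n x => ((v n)⁻¹ * (u n)⁻¹) • x := by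
      funext n x
      rw [mul_inv_rev]
    rw [this]
    exact tuo_mul (hu.2.2 K hK ha) (isConvSeq_inv hv).2.1 hne.symm

end ConvLemmas2

section ConvLemmas3
set_option linter.unusedSectionVars false

variable {G : Type} [Group G] {Y : Type} [MetricSpace Y] [CompactSpace Y] [MulAction G Y]

lemma exists_lox (hY : IsConvergenceAction G Y) {g : ℕ → G} {r a : Y}
    (hc : IsConvSeq G Y g r a) {z₀ : Y} {δ : ℝ} (hδ : 0 < δ)
    (hd1 : 3 * δ ≤ dist r a) (hd2 : 3 * δ ≤ dist z₀ r) (hd3 : 3 * δ ≤ dist z₀ a) :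
    ∃ (l : G) (r' a' : Y), ¬ IsOfFinOrder l ∧ {z : Y | l • z = z} = {r', a'} ∧
      r' ≠ a' ∧ dist r' r ≤ δ ∧ dist a' a ≤ δ := by
  haveI := hY.1
  have hK2 : IsCompact ((Metric.ball r δ)ᶜ) := Metric.isOpen_ball.isClosed_compl.isCompact
  have hrK2 : r ∉ (Metric.ball r δ)ᶜ := by simp [Metric.mem_ball, hδ]
  have hK3 : IsCompact ((Metric.ball a δ)ᶜ) := Metric.isOpen_ball.isClosed_compl.isCompact
  have haK3 : a ∉ (Metric.ball a δ)ᶜ := by simp [Metric.mem_ball, hδ]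
  have hu1 := (Metric.tendstoUniformlyOn_iff.1 (hc.2.1 _ hK2 hrK2)) δ hδ
  have hu2 := (Metric.tendstoUniformlyOn_iff.1 (hc.2.2 _ hK3 haK3)) δ hδ
  obtain ⟨N, hN1, hN2⟩ := (hu1.and hu2).exists
  set l := g N with hldef
  have P1 : ∀ x : Y, δ ≤ dist x r → dist (l • x) a < δ := by
    intro x hx
    have hxK : x ∈ (Metric.ball r δ)ᶜ := by
      simp only [Set.mem_compl_iff, Metric.mem_ball, not_lt]
      exact hx
    have := hN1 x hxK
    rwa [dist_comm] at this
  have P2 : ∀ x : Y, δ ≤ dist x a → dist (l⁻¹ • x) r < δ := by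
    intro x hx
    have hxK : x ∈ (Metric.ball a δ)ᶜ := by
      simp only [Set.mem_compl_iff, Metric.mem_ball, not_lt]
      exact hx
    have := hN2 x hxK
    rwa [dist_comm] at this
  have hrapos : (0:ℝ) < dist r a := by linarith
  have hball : ∀ x : Y, dist x a ≤ δ → dist (l • x) a < δ := by
    intro x hx
    apply P1
    have hc1 : dist r a ≤ dist r x + dist x a := dist_triangle r x a
    have : 2 * δ ≤ dist r x := by linarith
    rw [dist_comm]
    linarith
  have hball' : ∀ x : Y, dist x r ≤ δ → dist (l⁻¹ • x) r < δ := by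
    intro x hx
    apply P2
    have hc1 : dist r a ≤ dist r x + dist x a := dist_triangle r x a
    rw [dist_comm] at hx
    linarith
  have hpowA : ∀ m : ℕ, dist ((l ^ (m + 1)) • z₀) a < δ := by
    intro m
    induction m with
    | zero => simpa using P1 z₀ (by linarith)
    | succ k ih =>
      have hstep : (l ^ (k + 1 + 1)) • z₀ = l • ((l ^ (k + 1)) • z₀) := by
        rw [← mul_smul, ← pow_succ']
      rw [hstep]
      exact hball _ ih.le
  have hpowB : ∀ m : ℕ, dist ((l ^ (m + 1))⁻¹ • z₀) r < δ := by
    intro m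
    induction m with
    | zero => simpa using P2 z₀ (by linarith)
    | succ k ih =>
      have hstep : (l ^ (k + 1 + 1))⁻¹ • z₀ = l⁻¹ • ((l ^ (k + 1))⁻¹ • z₀) := by
        rw [← mul_smul, ← mul_inv_rev, ← pow_succ]
      rw [hstep]
      exact hball' _ ih.le
  have hord : ¬ IsOfFinOrder l := by
    intro hfin
    obtain ⟨k, hk, hk1⟩ := isOfFinOrder_iff_pow_eq_one.1 hfin
    have hb := hpowA (k - 1)
    rw [show k - 1 + 1 = k from by omega, hk1, one_smul] at hb
    linarith
  obtain ⟨e, ρ, α, he1, _, hconvP, hfixeq⟩ := pow_conv hY hord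
  have hρfix : l • ρ = ρ := by
    have : ρ ∈ {z : Y | l • z = z} := by rw [hfixeq]; exact Or.inl rfl
    exact this
  have hαfix : l • α = α := by
    have : α ∈ {z : Y | l • z = z} := by rw [hfixeq]; exact Or.inr rfl
    exact this
  have hloc : ∀ w : Y, l • w = w → dist w r < δ ∨ dist w a < δ := by
    intro w hw
    by_cases hdw : dist w r < δ
    · exact Or.inl hdw
    · right
      have := P1 w (not_lt.1 hdw)
      rwa [hw] at this
  have hz₀ρ : z₀ ≠ ρ := by
    rintro rfl
    rcases hloc _ hρfix with h | h
    · linarith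
    · linarith
  have hz₀α : z₀ ≠ α := by
    rintro rfl
    rcases hloc _ hαfix with h | h
    · linarith
    · linarith
  have hta : Tendsto (fun i => (l ^ e i) • z₀) atTop (nhds α) := convSeq_tendsto hconvP hz₀ρ
  have hboundA : ∀ i, dist ((l ^ e i) • z₀) a < δ := by
    intro i
    have h1e := he1 i
    have hnat : l ^ e i = l ^ ((e i).toNat - 1 + 1) := by
      rw [show (e i).toNat - 1 + 1 = (e i).toNat from by omega, ← zpow_natCast,
        Int.toNat_of_nonneg (by linarith)]
    rw [hnat]
    exact hpowA _
  have haα : dist α a ≤ δ :=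
    le_of_tendsto (hta.dist tendsto_const_nhds)
      (Filter.Eventually.of_forall fun i => (hboundA i).le)
  have htr : Tendsto (fun i => (l ^ e i)⁻¹ • z₀) atTop (nhds ρ) :=
    convSeq_tendsto_inv hconvP hz₀α
  have hboundB : ∀ i, dist ((l ^ e i)⁻¹ • z₀) r < δ := by
    intro i
    have h1e := he1 i
    have hnat : l ^ e i = l ^ ((e i).toNat - 1 + 1) := by
      rw [show (e i).toNat - 1 + 1 = (e i).toNat from by omega, ← zpow_natCast,
        Int.toNat_of_nonneg (by linarith)]
    rw [hnat]
    exact hpowB _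
  have hρr : dist ρ r ≤ δ :=
    le_of_tendsto (htr.dist tendsto_const_nhds)
      (Filter.Eventually.of_forall fun i => (hboundB i).le)
  have hne : ρ ≠ α := by
    rintro rfl
    have h4 : dist r a ≤ dist r ρ + dist ρ a := dist_triangle r ρ a
    rw [dist_comm r ρ] at h4
    linarith
  exact ⟨l, ρ, α, hord, hfixeq, hne, hρr, haα⟩

end ConvLemmas3

section ConvLemmas4
set_option linter.unusedSectionVars false

variable {G : Type} [Group G] {Y : Type} [MetricSpace Y] [CompactSpace Y] [MulAction G Y]

lemma exists_jump {P : ℤ → Prop} {s s' : ℤ} (hs : P s) (hs' : ¬ P s') :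
    ∃ t, P t ∧ (¬ P (t + 1) ∨ ¬ P (t - 1)) := by
  by_contra hno
  push_neg at hno
  have hup : ∀ n : ℕ, P (s + n) := by
    intro n
    induction n with
    | zero => simpa using hs
    | succ k ih =>
      have h2 := (hno _ ih).1
      have heq : s + (k:ℤ) + 1 = s + ((k+1 : ℕ) : ℤ) := by push_cast; ring
      rwa [heq] at h2
  have hdown : ∀ n : ℕ, P (s - n) := by
    intro n
    induction n with
    | zero => simpa using hs
    | succ k ih =>
      have h2 := (hno _ ih).2
      have heq : s - (k:ℤ) - 1 = s - ((k+1 : ℕ) : ℤ) := by push_cast; ring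
      rwa [heq] at h2
  rcases le_or_gt s s' with h | h
  · have h1 := hup (s' - s).toNat
    rw [show s + ((s' - s).toNat : ℤ) = s' by omega] at h1
    exact hs' h1
  · have h1 := hdown (s - s').toNat
    rw [show s - ((s - s').toNat : ℤ) = s' by omega] at h1
    exact hs' h1

lemma annulus (hY : IsConvergenceAction G Y) {gl : G} {a b : Y}
    (hord : ¬ IsOfFinOrder gl) (hfix : {z : Y | gl • z = z} = {a, b}) (hab : a ≠ b) :
    ∃ ε₀ : ℝ, 0 < ε₀ ∧ ∀ x : Y, x ≠ a → x ≠ b →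
      ∃ t : ℤ, ε₀ ≤ dist ((gl ^ t) • x) a ∧ ε₀ ≤ dist ((gl ^ t) • x) b := by
  have hdab : (0:ℝ) < dist a b := dist_pos.2 hab
  have hbfix : gl • b = b := by
    have : b ∈ {z : Y | gl • z = z} := by rw [hfix]; exact Or.inr rfl
    exact this
  have hafix : gl • a = a := by
    have : a ∈ {z : Y | gl • z = z} := by rw [hfix]; exact Or.inl rfl
    exact this
  by_contra hno
  push_neg at hno
  -- conv sequences of powers attracting a and attracting b
  obtain ⟨e, ρ, α, he1, hmono, hconvP, hfix'⟩ := pow_conv hY hord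
  have hpair : ({a, b} : Set Y) = {ρ, α} := hfix ▸ hfix'
  have hcases := Set.pair_eq_pair_iff.1 hpair
  obtain ⟨eA, hcA⟩ : ∃ eA : ℕ → ℤ, IsConvSeq G Y (fun i => gl ^ eA i) b a := by
    rcases hcases with ⟨h1, h2⟩ | ⟨h1, h2⟩
    · refine ⟨fun i => -e i, ?_⟩
      rw [h1, h2]
      have := isConvSeq_inv hconvP
      simpa [zpow_neg] using this
    · refine ⟨e, ?_⟩
      rw [h1, h2]
      exact hconvP
  obtain ⟨eB, hcB⟩ : ∃ eB : ℕ → ℤ, IsConvSeq G Y (fun i => gl ^ eB i) a b := by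
    rcases hcases with ⟨h1, h2⟩ | ⟨h1, h2⟩
    · refine ⟨e, ?_⟩
      rw [h1, h2]
      exact hconvP
    · refine ⟨fun i => -e i, ?_⟩
      rw [h1, h2]
      have := isConvSeq_inv hconvP
      simpa [zpow_neg] using this
  have key : ∀ ε : ℝ, 0 < ε → ε ≤ dist a b / 3 →
      (∃ y : Y, dist y b < ε ∧ dist (gl • y) a < ε) ∨
      (∃ y : Y, dist y b < ε ∧ dist (gl⁻¹ • y) a < ε) := by
    intro ε hε hε3
    obtain ⟨x, hxa, hxb, hconf0⟩ := hno ε hε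
    have hconf : ∀ t : ℤ, dist ((gl ^ t) • x) a < ε ∨ dist ((gl ^ t) • x) b < ε := by
      intro t
      by_cases hca : ε ≤ dist ((gl ^ t) • x) a
      · exact Or.inr (hconf0 t hca)
      · exact Or.inl (not_le.1 hca)
    have hdisj : ∀ t : ℤ, ¬ (dist ((gl ^ t) • x) a < ε ∧ dist ((gl ^ t) • x) b < ε) := by
      rintro t ⟨h1, h2⟩
      have := dist_triangle a ((gl ^ t) • x) b
      rw [dist_comm a ((gl ^ t) • x)] at this
      linarith
    obtain ⟨s, hs⟩ : ∃ s : ℤ, dist ((gl ^ s) • x) b < ε := by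
      obtain ⟨i, hi⟩ := (Metric.tendsto_nhds.1 (convSeq_tendsto hcB hxa) ε hε).exists
      exact ⟨eB i, hi⟩
    obtain ⟨s', hs'⟩ : ∃ s' : ℤ, dist ((gl ^ s') • x) a < ε := by
      obtain ⟨i, hi⟩ := (Metric.tendsto_nhds.1 (convSeq_tendsto hcA hxb) ε hε).exists
      exact ⟨eA i, hi⟩
    have hsnot : ¬ dist ((gl ^ s) • x) a < ε := fun h => hdisj s ⟨h, hs⟩
    have hs'not : ¬ dist ((gl ^ s') • x) b < ε := fun h => hdisj s' ⟨hs', h⟩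
    obtain ⟨t₀, ht₀P, ht₀jump⟩ := exists_jump (P := fun t => dist ((gl ^ t) • x) b < ε) hs hs'not
    rcases ht₀jump with hj | hj
    · have hnexta : dist ((gl ^ (t₀ + 1)) • x) a < ε := (hconf (t₀ + 1)).resolve_right hj
      refine Or.inl ⟨(gl ^ t₀) • x, ht₀P, ?_⟩
      rw [← mul_smul, show gl * gl ^ t₀ = gl ^ (t₀ + 1) by rw [← zpow_one_add, add_comm]]
      exact hnexta
    · have hnexta : dist ((gl ^ (t₀ - 1)) • x) a < ε := (hconf (t₀ - 1)).resolve_right hj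
      refine Or.inr ⟨(gl ^ t₀) • x, ht₀P, ?_⟩
      rw [← mul_smul, show gl⁻¹ * gl ^ t₀ = gl ^ (t₀ - 1) by
        rw [show t₀ - 1 = -1 + t₀ by ring, zpow_add, zpow_neg_one]]
      exact hnexta
  -- now derive contradiction
  have final : ∀ c : G, c • b = b →
      (∀ ε : ℝ, 0 < ε → ∃ y, dist y b < ε ∧ dist (c • y) a < ε) → False := by
    intro c hcb hprop
    have hcont : Continuous fun x : Y => c • x := hY.2.1 c
    have hlt : ∀ ε' : ℝ, 0 < ε' → dist b a < ε' := by
      intro ε' hε'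
      obtain ⟨δc, hδc, hδcp⟩ := Metric.continuous_iff.1 hcont b (ε' / 2) (by linarith)
      obtain ⟨y, hy1, hy2⟩ := hprop (min δc (ε' / 2)) (lt_min hδc (by linarith))
      have h1 : dist (c • y) (c • b) < ε' / 2 := hδcp y (lt_of_lt_of_le hy1 (min_le_left _ _))
      rw [hcb] at h1
      have := dist_triangle b (c • y) a
      rw [dist_comm b (c • y)] at this
      have hy2' : dist (c • y) a < ε' / 2 := lt_of_lt_of_le hy2 (min_le_right _ _)
      linarith
    have := hlt (dist b a) (by rw [dist_comm]; exact hdab)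
    exact lt_irrefl _ this
  set εf : ℕ → ℝ := fun n => min (1 / (n + 1)) (dist a b / 3) with hεf
  have hεfpos : ∀ n : ℕ, 0 < εf n := fun n => lt_min (by positivity) (by linarith)
  have key' : ∀ n : ℕ,
      (∃ y : Y, dist y b < εf n ∧ dist (gl • y) a < εf n) ∨
      (∃ y : Y, dist y b < εf n ∧ dist (gl⁻¹ • y) a < εf n) :=
    fun n => key _ (hεfpos n) (min_le_right _ _)
  set A := {n : ℕ | ∃ y : Y, dist y b < εf n ∧ dist (gl • y) a < εf n} with hA
  set B := {n : ℕ | ∃ y : Y, dist y b < εf n ∧ dist (gl⁻¹ • y) a < εf n} with hB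
  have hAB : A.Infinite ∨ B.Infinite := by
    by_contra hcon
    push_neg at hcon
    have hsub : (Set.univ : Set ℕ) ⊆ A ∪ B := fun n _ => key' n
    exact Set.infinite_univ (Set.Finite.subset (hcon.1.union hcon.2) hsub)
  have hsmall : ∀ (S : Set ℕ), S.Infinite → ∀ ε : ℝ, 0 < ε → ∃ n ∈ S, εf n < ε := by
    intro S hS ε hε
    obtain ⟨n₀, hn₀⟩ := exists_nat_gt (1 / ε)
    obtain ⟨m, hmS, hm⟩ := hS.exists_gt n₀
    refine ⟨m, hmS, lt_of_le_of_lt (min_le_left _ _) ?_⟩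
    have hm1 : (1:ℝ) / ε < (m:ℝ) + 1 := by
      have hcast : (n₀:ℝ) ≤ (m:ℝ) := by exact_mod_cast hm.le
      linarith
    have h2 : (1:ℝ) < ((m:ℝ) + 1) * ε := (div_lt_iff₀ hε).1 hm1
    rw [mul_comm] at h2
    rw [div_lt_iff₀ (show (0:ℝ) < (m:ℝ) + 1 by positivity)]
    exact h2
  rcases hAB with hinf | hinf
  · apply final gl hbfix
    intro ε hε
    obtain ⟨n, hnS, hn⟩ := hsmall A hinf ε hε
    obtain ⟨y, hy1, hy2⟩ := hnS
    exact ⟨y, hy1.trans hn, hy2.trans hn⟩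
  · apply final gl⁻¹ (by rw [← hbfix, inv_smul_smul, hbfix])
    intro ε hε
    obtain ⟨n, hnS, hn⟩ := hsmall B hinf ε hε
    obtain ⟨y, hy1, hy2⟩ := hnS
    exact ⟨y, hy1.trans hn, hy2.trans hn⟩

end ConvLemmas4

section ConvLemmas5
set_option linter.unusedSectionVars false

variable {G : Type} [Group G] {Y : Type} [MetricSpace Y] [CompactSpace Y] [MulAction G Y]

lemma zpow_ne_one' {c : G} (hc : ¬ IsOfFinOrder c) {s : ℤ} (hs : s ≠ 0) : c ^ s ≠ 1 := by
  intro hcon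
  have hinj := injective_zpow_iff_not_isOfFinOrder.2 hc
  have : s = 0 := hinj (by simpa using hcon)
  exact hs this

lemma not_finOrder_zpow {c : G} (hc : ¬ IsOfFinOrder c) {s : ℤ} (hs : s ≠ 0) :
    ¬ IsOfFinOrder (c ^ s) := by
  intro hcon
  obtain ⟨k, hk, hk1⟩ := isOfFinOrder_iff_pow_eq_one.1 hcon
  rw [← zpow_natCast, ← zpow_mul] at hk1
  exact zpow_ne_one' hc (mul_ne_zero hs (by exact_mod_cast hk.ne')) hk1

lemma three_not_subset_pair {a b e ρ α : Y} (hab : a ≠ b) (hae : a ≠ e) (heb : e ≠ b)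
    (hsub : ({a, b, e} : Set Y) ⊆ {ρ, α}) : False := by
  have ha : a = ρ ∨ a = α := hsub (Or.inl rfl)
  have hb : b = ρ ∨ b = α := hsub (Or.inr (Or.inl rfl))
  have he : e = ρ ∨ e = α := hsub (Or.inr (Or.inr rfl))
  rcases ha with rfl | rfl <;> rcases hb with hb | hb <;> rcases he with he | he <;>
    first
      | exact hab hb.symm
      | exact hae he.symm
      | exact heb (he.trans hb.symm)

lemma no_shared_fix (hY : IsConvergenceAction G Y) {g h : G} {a b e : Y}
    (hgord : ¬ IsOfFinOrder g) (hgfix : {z : Y | g • z = z} = {a, b}) (hab : a ≠ b)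
    (hhord : ¬ IsOfFinOrder h) (hhfix : {z : Y | h • z = z} = {a, e}) (hae : a ≠ e)
    (heb : e ≠ b) : False := by
  haveI := hY.1
  have hcont := hY.2.1
  have hga : g • a = a := by
    have : a ∈ {z : Y | g • z = z} := by rw [hgfix]; exact Or.inl rfl
    exact this
  have hgb : g • b = b := by
    have : b ∈ {z : Y | g • z = z} := by rw [hgfix]; exact Or.inr rfl
    exact this
  have hha : h • a = a := by
    have : a ∈ {z : Y | h • z = z} := by rw [hhfix]; exact Or.inl rfl
    exact this
  have hhe : h • e = e := by
    have : e ∈ {z : Y | h • z = z} := by rw [hhfix]; exact Or.inr rfl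
    exact this
  have hgza : ∀ s : ℤ, (g ^ s) • a = a := fun s =>
    MulAction.mem_stabilizer_iff.1 (zpow_mem (MulAction.mem_stabilizer_iff.2 hga) s)
  have hgzb : ∀ s : ℤ, (g ^ s) • b = b := fun s =>
    MulAction.mem_stabilizer_iff.1 (zpow_mem (MulAction.mem_stabilizer_iff.2 hgb) s)
  have hhza : ∀ s : ℤ, (h ^ s) • a = a := fun s =>
    MulAction.mem_stabilizer_iff.1 (zpow_mem (MulAction.mem_stabilizer_iff.2 hha) s)
  have hhze : ∀ s : ℤ, (h ^ s) • e = e := fun s =>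
    MulAction.mem_stabilizer_iff.1 (zpow_mem (MulAction.mem_stabilizer_iff.2 hhe) s)
  obtain ⟨ε₀, hε₀, hann⟩ := annulus hY hgord hgfix hab
  -- oriented h-powers converging (e, a)
  obtain ⟨eh, ρh, αh, heh1, hehmono, hconvH, hfixH⟩ := pow_conv hY hhord
  have hpairH : ({a, e} : Set Y) = {ρh, αh} := hhfix ▸ hfixH
  obtain ⟨n, hn_inj, hcH⟩ : ∃ n : ℕ → ℤ, Function.Injective n ∧
      IsConvSeq G Y (fun i => h ^ n i) e a := by
    rcases Set.pair_eq_pair_iff.1 hpairH with ⟨h1, h2⟩ | ⟨h1, h2⟩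
    · refine ⟨fun i => -(eh i), fun i j hij => hehmono.injective (neg_injective hij), ?_⟩
      rw [h1, h2]
      have := isConvSeq_inv hconvH
      simpa [zpow_neg] using this
    · refine ⟨eh, hehmono.injective, ?_⟩
      rw [h1, h2]
      exact hconvH
  -- a fourth point
  obtain ⟨w, hw⟩ : ∃ w : Y, w ∉ ({a, b, e} : Set Y) :=
    exists_not_mem_of_finite (((Set.finite_singleton e).insert b).insert a)
  have hwa : w ≠ a := fun h' => hw (by simp [h'])
  have hwb : w ≠ b := fun h' => hw (by simp [h'])
  have hwe : w ≠ e := fun h' => hw (by simp [h'])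
  have hhzainv : ∀ s : ℤ, (h ^ s)⁻¹ • a = a := fun s => by rw [← zpow_neg]; exact hhza _
  have hx_t : Tendsto (fun i => (h ^ n i) • w) atTop (nhds a) := convSeq_tendsto hcH hwe
  have hxa : ∀ i, (h ^ n i) • w ≠ a := by
    intro i h'
    apply hwa
    have := congrArg (fun z => (h ^ n i)⁻¹ • z) h'
    simpa [inv_smul_smul, hhzainv] using this
  -- shift so that x_m ≠ b
  obtain ⟨M₀, hM₀⟩ : ∃ M₀, ∀ i ≥ M₀, (h ^ n i) • w ≠ b := by
    have hev := Metric.tendsto_nhds.1 hx_t (dist b a) (dist_pos.2 (Ne.symm hab))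
    rw [Filter.eventually_atTop] at hev
    obtain ⟨M₀, hM₀⟩ := hev
    refine ⟨M₀, fun i hi h' => ?_⟩
    have := hM₀ i hi
    rw [h'] at this
    exact lt_irrefl _ this
  have hφM : StrictMono (fun i : ℕ => i + M₀) := fun i j hij => by simpa using Nat.add_lt_add_right hij M₀
  set n' : ℕ → ℤ := fun i => n (i + M₀) with hn'
  have hcH' : IsConvSeq G Y (fun i => h ^ n' i) e a := isConvSeq_comp hcH hφM
  have hn'_inj : Function.Injective n' := fun i j hij => by
    have := hn_inj hij
    omega
  have hxa' : ∀ i, (h ^ n' i) • w ≠ a := fun i => hxa _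
  have hxb' : ∀ i, (h ^ n' i) • w ≠ b := fun i => hM₀ _ (Nat.le_add_left _ _)
  -- choose renormalizing powers of g
  have hchoice : ∀ i : ℕ, ∃ s : ℤ, ε₀ ≤ dist ((g ^ s) • ((h ^ n' i) • w)) a ∧
      ε₀ ≤ dist ((g ^ s) • ((h ^ n' i) • w)) b := fun i => hann _ (hxa' i) (hxb' i)
  choose t ht₁ ht₂ using hchoice
  set k : ℕ → G := fun i => g ^ t i * h ^ n' i with hkdef
  have hksmul : ∀ i, k i • w = (g ^ t i) • ((h ^ n' i) • w) := fun i => mul_smul _ _ _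
  have hka : ∀ i, k i • a = a := fun i => by
    rw [hkdef]
    simp only []
    rw [mul_smul, hhza, hgza]
  have hke : ∀ i, k i • e = (g ^ t i) • e := fun i => by
    rw [hkdef]
    simp only []
    rw [mul_smul, hhze]
  have hkinj : Function.Injective k := by
    intro i j hij
    by_contra hne
    have hnij : n' i ≠ n' j := fun h' => hne (hn'_inj h')
    have hkey : g ^ (t i - t j) = h ^ (n' j - n' i) := by
      have hij' : g ^ t i * h ^ n' i = g ^ t j * h ^ n' j := hij
      have hl : (g ^ t j)⁻¹ * (g ^ t i * h ^ n' i) * (h ^ n' i)⁻¹ = g ^ (t i - t j) := by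
        rw [zpow_sub]
        group
      have hr : (g ^ t j)⁻¹ * (g ^ t j * h ^ n' j) * (h ^ n' i)⁻¹ = h ^ (n' j - n' i) := by
        rw [zpow_sub]
        group
      rw [← hl, hij', hr]
    have hs0 : n' j - n' i ≠ 0 := sub_ne_zero.2 (Ne.symm hnij)
    by_cases hts : t i - t j = 0
    · rw [hts, zpow_zero] at hkey
      exact zpow_ne_one' hhord hs0 hkey.symm
    · have hcord : ¬ IsOfFinOrder (g ^ (t i - t j)) := not_finOrder_zpow hgord hts
      obtain ⟨e2, ρ2, α2, _, _, hconv2, hfix2⟩ := pow_conv hY hcord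
      have hsub : ({a, b, e} : Set Y) ⊆ {ρ2, α2} := by
        rw [← hfix2]
        intro z hz
        simp only [Set.mem_insert_iff, Set.mem_singleton_iff] at hz
        rcases hz with rfl | rfl | rfl
        · show (g ^ (t i - t j)) • z = z
          exact hgza _
        · show (g ^ (t i - t j)) • z = z
          exact hgzb _
        · show (g ^ (t i - t j)) • z = z
          rw [hkey]
          exact hhze _
      exact three_not_subset_pair hab hae heb hsub
  -- convergence subsequence for k
  obtain ⟨φ₁, ρs, αs, hφ₁, hconvK₁⟩ := hY.2.2 k hkinj
  -- compact set away from a and b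
  have hKcclosed : IsClosed {y : Y | ε₀ ≤ dist y a ∧ ε₀ ≤ dist y b} := by
    have h1 : IsClosed {y : Y | ε₀ ≤ dist y a} :=
      isClosed_le continuous_const (Continuous.dist continuous_id continuous_const)
    have h2 : IsClosed {y : Y | ε₀ ≤ dist y b} :=
      isClosed_le continuous_const (Continuous.dist continuous_id continuous_const)
    exact h1.inter h2
  have hmemK : ∀ i, k (φ₁ i) • w ∈ {y : Y | ε₀ ≤ dist y a ∧ ε₀ ≤ dist y b} := fun i =>
    ⟨by rw [hksmul]; exact ht₁ _, by rw [hksmul]; exact ht₂ _⟩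
  obtain ⟨ustar, hustar, φ₂, hφ₂, hu_t⟩ := hKcclosed.isCompact.tendsto_subseq hmemK
  have hua : ε₀ ≤ dist ustar a := hustar.1
  have hub : ε₀ ≤ dist ustar b := hustar.2
  set m : ℕ → ℕ := fun i => φ₁ (φ₂ i) with hm
  have hmmono : StrictMono m := hφ₁.comp hφ₂
  have hconvK : IsConvSeq G Y (fun i => k (m i)) ρs αs := isConvSeq_comp hconvK₁ hφ₂
  have hu_t' : Tendsto (fun i => k (m i) • w) atTop (nhds ustar) := hu_t
  have hcHm : IsConvSeq G Y (fun i => h ^ n' (m i)) e a := isConvSeq_comp hcH' hmmono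
  by_cases hρa : ρs = a
  · -- repelling point is a
    have hwρ : w ≠ ρs := by rw [hρa]; exact hwa
    have hαu : αs = ustar := tendsto_nhds_unique (convSeq_tendsto hconvK hwρ) hu_t'
    have heρ : e ≠ ρs := by rw [hρa]; exact Ne.symm hae
    have hke_t : Tendsto (fun i => k (m i) • e) atTop (nhds αs) := convSeq_tendsto hconvK heρ
    have hke_t' : Tendsto (fun i => (g ^ t (m i)) • e) atTop (nhds ustar) := by
      rw [← hαu]
      rw [show (fun i => (g ^ t (m i)) • e) = fun i => k (m i) • e from funext fun i => (hke (m i)).symm]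
      exact hke_t
    by_cases hTfin : (Set.range fun i => t (m i)).Finite
    · obtain ⟨t₀, hfib⟩ := exists_infinite_fiber _ hTfin
      obtain ⟨x, hx⟩ : ∃ x : Y, x ∉ ({a, ustar} : Set Y) :=
        exists_not_mem_of_finite ((Set.finite_singleton _).insert _)
      have hxa2 : x ≠ a := fun h' => hx (by simp [h'])
      have hxu : x ≠ ustar := fun h' => hx (by simp [h'])
      have hfull : Tendsto (fun i => (k (m i))⁻¹ • x) atTop (nhds ρs) :=
        convSeq_tendsto_inv hconvK (by rw [hαu]; exact hxu)
      have hι : StrictMono (Nat.nth fun i => t (m i) = t₀) := Nat.nth_strictMono hfib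
      have hιmem : ∀ j, t (m (Nat.nth (fun i => t (m i) = t₀) j)) = t₀ := fun j =>
        Nat.nth_mem_of_infinite hfib j
      have hsub_full : Tendsto (fun j => (k (m (Nat.nth (fun i => t (m i) = t₀) j)))⁻¹ • x)
          atTop (nhds ρs) := hfull.comp hι.tendsto_atTop
      have hz : (g ^ t₀)⁻¹ • x ≠ a := by
        intro h'
        apply hxa2
        have := congrArg (fun z => (g ^ t₀) • z) h'
        simpa [smul_inv_smul, hgza] using this
      have hcHmι : IsConvSeq G Y (fun j => h ^ n' (m (Nat.nth (fun i => t (m i) = t₀) j))) e a :=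
        isConvSeq_comp hcHm hι
      have hinvt : Tendsto (fun j => (h ^ n' (m (Nat.nth (fun i => t (m i) = t₀) j)))⁻¹ •
          ((g ^ t₀)⁻¹ • x)) atTop (nhds e) := convSeq_tendsto_inv hcHmι hz
      have hcompute : (fun j => (k (m (Nat.nth (fun i => t (m i) = t₀) j)))⁻¹ • x) =
          fun j => (h ^ n' (m (Nat.nth (fun i => t (m i) = t₀) j)))⁻¹ • ((g ^ t₀)⁻¹ • x) := by
        funext j
        rw [hkdef]
        simp only []
        rw [mul_inv_rev, mul_smul, hιmem j]
      rw [hcompute] at hsub_full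
      have : ρs = e := tendsto_nhds_unique hsub_full hinvt
      rw [hρa] at this
      exact hae this
    · have hTinf : (Set.range fun i => t (m i)).Infinite := hTfin
      obtain ⟨ψ, hψ, hψinj⟩ := exists_injective_comp _ hTinf
      have hginj : Function.Injective fun j => g ^ t (m (ψ j)) := by
        intro i j hij
        exact hψinj ((injective_zpow_iff_not_isOfFinOrder.2 hgord) hij)
      obtain ⟨φ₄, ρg, αg, hφ₄, hconvG⟩ := hY.2.2 _ hginj
      have hconvG' : IsConvSeq G Y (fun i => g ^ t (m (ψ (φ₄ i)))) ρg αg := hconvG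
      have hfixg := pair_fixed hcont hconvG'
      have hρgmem : ρg ∈ ({a, b} : Set Y) := by rw [← hgfix]; exact hfixg.1
      have hαgmem : αg ∈ ({a, b} : Set Y) := by rw [← hgfix]; exact hfixg.2
      have heρg : e ≠ ρg := by
        rcases hρgmem with h' | h'
        · rw [h']; exact Ne.symm hae
        · rw [h']; exact heb
      have hge_t : Tendsto (fun i => (g ^ t (m (ψ (φ₄ i)))) • e) atTop (nhds αg) :=
        convSeq_tendsto hconvG' heρg
      have hsubmono : StrictMono (fun i => ψ (φ₄ i)) := hψ.comp hφ₄
      have hsub2 : Tendsto (fun i => (g ^ t (m (ψ (φ₄ i)))) • e) atTop (nhds ustar) :=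
        hke_t'.comp hsubmono.tendsto_atTop
      have hαgu : αg = ustar := tendsto_nhds_unique hge_t hsub2
      rcases hαgmem with h' | h'
      · have : ustar = a := by rw [← hαgu, h']
        rw [this] at hua
        simp at hua
        linarith
      · have : ustar = b := by rw [← hαgu, h']
        rw [this] at hub
        simp at hub
        linarith
  · by_cases hρw : ρs = w
    · -- repelling point is w
      have haρ : a ≠ ρs := fun h' => hρa h'.symm
      have hka_t : Tendsto (fun i => k (m i) • a) atTop (nhds αs) := convSeq_tendsto hconvK haρ
      rw [show (fun i => k (m i) • a) = fun _ => a from funext fun i => hka (m i)] at hka_t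
      have hαa : αs = a := tendsto_nhds_unique hka_t tendsto_const_nhds
      have hbα : b ≠ αs := by rw [hαa]; exact Ne.symm hab
      have hbinv_t : Tendsto (fun i => (k (m i))⁻¹ • b) atTop (nhds ρs) :=
        convSeq_tendsto_inv hconvK hbα
      have hcompute : (fun i => (k (m i))⁻¹ • b) = fun i => (h ^ n' (m i))⁻¹ • b := by
        funext i
        rw [hkdef]
        simp only []
        rw [mul_inv_rev, mul_smul, show (g ^ t (m i))⁻¹ • b = b from by
          rw [← zpow_neg]; exact hgzb _]
      rw [hcompute] at hbinv_t
      have hinv_t : Tendsto (fun i => (h ^ n' (m i))⁻¹ • b) atTop (nhds e) :=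
        convSeq_tendsto_inv hcHm (Ne.symm hab)
      have : ρs = e := tendsto_nhds_unique hbinv_t hinv_t
      rw [hρw] at this
      exact hwe this
    · -- repelling point is neither a nor w
      have haρ : a ≠ ρs := fun h' => hρa h'.symm
      have hwρ : w ≠ ρs := fun h' => hρw h'.symm
      have hka_t : Tendsto (fun i => k (m i) • a) atTop (nhds αs) := convSeq_tendsto hconvK haρ
      rw [show (fun i => k (m i) • a) = fun _ => a from funext fun i => hka (m i)] at hka_t
      have hαa : αs = a := tendsto_nhds_unique hka_t tendsto_const_nhds
      have hαu : αs = ustar := tendsto_nhds_unique (convSeq_tendsto hconvK hwρ) hu_t'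
      have : ustar = a := by rw [← hαu, hαa]
      rw [this] at hua
      simp at hua
      linarith

end ConvLemmas5

section ConvLemmas6
set_option linter.unusedSectionVars false

variable {G : Type} [Group G] {Y : Type} [MetricSpace Y] [CompactSpace Y] [MulAction G Y]

lemma exists_conv_ne (hY : IsConvergenceAction G Y) (hinf : (limitSet G Y).Infinite) :
    ∃ (w : ℕ → G) (r a : Y), r ≠ a ∧ IsConvSeq G Y w r a := by
  haveI := hY.1
  obtain ⟨q1, hq1⟩ := hinf.nonempty
  obtain ⟨q2, hq2mem, hq2ne⟩ : ∃ q2 ∈ limitSet G Y, q2 ≠ q1 := by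
    obtain ⟨q2, hq2⟩ := (hinf.diff (Set.finite_singleton q1)).nonempty
    exact ⟨q2, hq2.1, by simpa using hq2.2⟩
  obtain ⟨g1, r1, a1, -, hc1, hq1or⟩ := hq1
  obtain ⟨g2, r2, a2, -, hc2, hq2or⟩ := hq2mem
  by_cases h1 : r1 = a1
  · by_cases h2 : r2 = a2
    · have he1 : r1 = q1 ∧ a1 = q1 := by
        rcases hq1or with h | h
        · exact ⟨h.symm, h1 ▸ h.symm⟩
        · exact ⟨h1.trans h.symm, h.symm⟩
      have he2 : r2 = q2 ∧ a2 = q2 := by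
        rcases hq2or with h | h
        · exact ⟨h.symm, h2 ▸ h.symm⟩
        · exact ⟨h2.trans h.symm, h.symm⟩
      rw [he1.1, he1.2] at hc1
      rw [he2.1, he2.2] at hc2
      obtain ⟨hfwd, hbwd⟩ := conv_comp hc2 (isConvSeq_inv hc1) hq2ne.symm
      by_cases hfin : (Set.range fun n => g2 n * (g1 n)⁻¹).Finite
      · exfalso
        obtain ⟨c, hfib⟩ := exists_infinite_fiber _ hfin
        have hfreq : ∃ᶠ n in atTop, g2 n * (g1 n)⁻¹ = c :=
          Nat.frequently_atTop_iff_infinite.2 hfib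
        obtain ⟨x1, hx1⟩ : ∃ x1 : Y, x1 ∉ ({q1} : Set Y) :=
          exists_not_mem_of_finite (Set.finite_singleton _)
        obtain ⟨x2, hx2⟩ : ∃ x2 : Y, x2 ∉ ({q1, x1} : Set Y) :=
          exists_not_mem_of_finite ((Set.finite_singleton _).insert _)
        have hx1q : x1 ≠ q1 := fun h => hx1 (by simp [h])
        have hx2q : x2 ≠ q1 := fun h => hx2 (by simp [h])
        have hx21 : x2 ≠ x1 := fun h => hx2 (by simp [h])
        have hxt : ∀ x : Y, x ≠ q1 → c • x = q2 := by
          intro x hx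
          have ht : Tendsto (fun n => (g2 n * (g1 n)⁻¹) • x) atTop (nhds q2) :=
            (hfwd {x} isCompact_singleton (by simpa using fun h => hx h.symm)).tendsto_at rfl
          exact (tendsto_nhds_unique_of_frequently_eq ht tendsto_const_nhds
            (hfreq.mono fun n hn => by rw [hn])).symm
        have := (hxt x1 hx1q).trans (hxt x2 hx2q).symm
        exact hx21 (smul_left_cancel c this).symm
      · obtain ⟨ψ, hψ, hψinj⟩ := exists_injective_comp _ hfin
        refine ⟨(fun n => g2 n * (g1 n)⁻¹) ∘ ψ, q1, q2, hq2ne.symm, hψinj, ?_, ?_⟩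
        · intro K hK hr
          exact tuo_comp (hfwd K hK hr) hψ
        · intro K hK ha
          exact tuo_comp (hbwd K hK ha) hψ
    · exact ⟨g2, r2, a2, h2, hc2⟩
  · exact ⟨g1, r1, a1, h1, hc1⟩

lemma no_global_fix (hY : IsConvergenceAction G Y) (hinf : (limitSet G Y).Infinite)
    (c : Y) (hc : ∀ gg : G, gg • c = c) : False := by
  haveI := hY.1
  obtain ⟨q1, hq1mem, hq1ne⟩ : ∃ q1 ∈ limitSet G Y, q1 ≠ c := by
    obtain ⟨q1, hq⟩ := (hinf.diff (Set.finite_singleton c)).nonempty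
    exact ⟨q1, hq.1, by simpa using hq.2⟩
  obtain ⟨q2, hq2mem, hq2c, hq2q1⟩ : ∃ q2 ∈ limitSet G Y, q2 ≠ c ∧ q2 ≠ q1 := by
    obtain ⟨q2, hq⟩ := (hinf.diff ((Set.finite_singleton q1).insert c)).nonempty
    have h2 := hq.2
    simp only [Set.mem_insert_iff, Set.mem_singleton_iff, not_or] at h2
    exact ⟨q2, hq.1, h2.1, h2.2⟩
  have horient : ∀ q : Y, q ∈ limitSet G Y → q ≠ c → ∃ u : ℕ → G, IsConvSeq G Y u c q := by
    intro q hqm hqc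
    obtain ⟨u, r, aa, -, hcu, hqor⟩ := hqm
    have hcra : c = r ∨ c = aa := by
      by_cases h : c = r
      · exact Or.inl h
      · right
        have ht : Tendsto (fun n => u n • c) atTop (nhds aa) := convSeq_tendsto hcu h
        rw [show (fun n => u n • c) = fun _ => c from funext fun n => hc (u n)] at ht
        exact tendsto_nhds_unique tendsto_const_nhds ht
    rcases hqor with rfl | rfl
    · have hca : c = aa := by
        rcases hcra with h | h
        · exact absurd h.symm hqc
        · exact h
      rw [← hca] at hcu
      exact ⟨_, isConvSeq_inv hcu⟩
    · have hcr : c = r := by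
        rcases hcra with h | h
        · exact h
        · exact absurd h.symm hqc
      rw [← hcr] at hcu
      exact ⟨u, hcu⟩
  obtain ⟨u, hcu⟩ := horient q1 hq1mem hq1ne
  obtain ⟨v, hcv⟩ := horient q2 hq2mem hq2c
  have hd1 : (0:ℝ) < dist c q1 := dist_pos.2 (Ne.symm hq1ne)
  have hd2 : (0:ℝ) < dist q2 c := dist_pos.2 hq2c
  have hd3 : (0:ℝ) < dist q2 q1 := dist_pos.2 hq2q1
  have hd4 : (0:ℝ) < dist c q2 := dist_pos.2 (Ne.symm hq2c)
  have hd5 : (0:ℝ) < dist q1 c := dist_pos.2 hq1ne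
  have hd6 : (0:ℝ) < dist q1 q2 := dist_pos.2 (Ne.symm hq2q1)
  set δ1 : ℝ := min (min (dist q2 c) (dist q2 q1)) (dist c q1) / 3 with hδ1
  have hδ1pos : 0 < δ1 := by
    apply div_pos _ (by norm_num)
    exact lt_min (lt_min hd2 hd3) hd1
  have h3δ1 : 3 * δ1 = min (min (dist q2 c) (dist q2 q1)) (dist c q1) := by
    rw [hδ1]; ring
  obtain ⟨U, rU, aU, hUord, hUfix, hUne, hUr, hUa⟩ := exists_lox hY hcu hδ1pos
    (by rw [h3δ1]; exact min_le_right _ _)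
    (by rw [h3δ1]; exact le_trans (min_le_left _ _) (min_le_left _ _))
    (by rw [h3δ1]; exact le_trans (min_le_left _ _) (min_le_right _ _))
  set δ2 : ℝ := min (min (dist q1 c) (dist q1 q2)) (dist c q2) / 3 with hδ2
  have hδ2pos : 0 < δ2 := by
    apply div_pos _ (by norm_num)
    exact lt_min (lt_min hd5 hd6) hd4
  have h3δ2 : 3 * δ2 = min (min (dist q1 c) (dist q1 q2)) (dist c q2) := by
    rw [hδ2]; ring
  obtain ⟨V, rV, aV, hVord, hVfix, hVne, hVr, hVa⟩ := exists_lox hY hcv hδ2pos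
    (by rw [h3δ2]; exact min_le_right _ _)
    (by rw [h3δ2]; exact le_trans (min_le_left _ _) (min_le_left _ _))
    (by rw [h3δ2]; exact le_trans (min_le_left _ _) (min_le_right _ _))
  -- identify c with the repelling fixed points
  have hcU : c = rU := by
    have hmem : c ∈ {z : Y | U • z = z} := hc U
    rw [hUfix] at hmem
    rcases hmem with h | h
    · exact h
    · exfalso
      have hdcq1 : dist c q1 ≤ δ1 := by rw [h]; exact hUa
      have : 3 * δ1 ≤ dist c q1 := by rw [h3δ1]; exact min_le_right _ _
      linarith
  have hcV : c = rV := by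
    have hmem : c ∈ {z : Y | V • z = z} := hc V
    rw [hVfix] at hmem
    rcases hmem with h | h
    · exact h
    · exfalso
      have hdcq2 : dist c q2 ≤ δ2 := by rw [h]; exact hVa
      have : 3 * δ2 ≤ dist c q2 := by rw [h3δ2]; exact min_le_right _ _
      linarith
  rw [← hcU] at hUfix hUne
  rw [← hcV] at hVfix hVne
  -- aV ≠ aU
  have haVaU : aV ≠ aU := by
    intro hcon
    have h1 : dist aU q1 ≤ δ1 := hUa
    have h2 : dist aV q2 ≤ δ2 := hVa
    have h3 : δ1 ≤ dist q2 q1 / 3 := by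
      have := le_trans (min_le_left (min (dist q2 c) (dist q2 q1)) (dist c q1))
        (min_le_right (dist q2 c) (dist q2 q1))
      rw [hδ1]
      linarith
    have h4 : δ2 ≤ dist q1 q2 / 3 := by
      have := le_trans (min_le_left (min (dist q1 c) (dist q1 q2)) (dist c q2))
        (min_le_right (dist q1 c) (dist q1 q2))
      rw [hδ2]
      linarith
    have htri : dist q2 q1 ≤ dist q2 aV + dist aV q1 := dist_triangle _ _ _
    rw [dist_comm q2 aV] at htri
    rw [← hcon] at h1
    have hq12 : dist q1 q2 = dist q2 q1 := dist_comm _ _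
    linarith
  exact no_shared_fix hY hUord hUfix hUne hVord hVfix hVne haVaU

end ConvLemmas6

section ConvLemmas7
set_option linter.unusedSectionVars false

variable {G : Type} [Group G] {Y : Type} [MetricSpace Y] [CompactSpace Y] [MulAction G Y]

lemma lox_pullback {Z : Type} [MetricSpace Z] [CompactSpace Z] [MulAction G Z]
    (hZ : IsConvergenceAction G Z) (hY : IsConvergenceAction G Y)
    (f : Z → Y) (hf : Continuous f) (hfe : ∀ (gg : G) (x : Z), f (gg • x) = gg • f x)
    {l : G} (hl : IsLoxodromic G Y l) :
    IsLoxodromic G Z l ∨ ∃ c : Y, ∀ gg : G, gg • c = c := by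
  haveI := hZ.1
  obtain ⟨hord, x0, y0, hxy, hfixY⟩ := hl
  obtain ⟨eZ, rZ, aZ, heZ1, heZmono, hconvZ, hfixZ⟩ := pow_conv hZ hord
  by_cases hZne : rZ = aZ
  · right
    -- find the pair in Y along a further subsequence
    have hinj : Function.Injective fun i => l ^ eZ i := fun i j hij =>
      heZmono.injective ((injective_zpow_iff_not_isOfFinOrder.2 hord) hij)
    obtain ⟨φ₂, rY, aY, hφ₂, hconvY₁⟩ := hY.2.2 _ hinj
    have hconvY' : IsConvSeq G Y (fun i => l ^ eZ (φ₂ i)) rY aY := hconvY₁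
    have hconvZ' : IsConvSeq G Z (fun i => l ^ eZ (φ₂ i)) rZ aZ := isConvSeq_comp hconvZ hφ₂
    have hsubY : {z : Y | l • z = z} ⊆ {rY, aY} := fix_subset_pair hconvY'
    have hx0 : x0 ∈ ({rY, aY} : Set Y) := hsubY (by rw [hfixY]; exact Or.inl rfl)
    have hy0 : y0 ∈ ({rY, aY} : Set Y) := hsubY (by rw [hfixY]; exact Or.inr rfl)
    have hrYaY : rY ≠ aY := by
      rintro rfl
      simp only [Set.mem_insert_iff, Set.mem_singleton_iff, or_self] at hx0 hy0
      exact hxy (hx0.trans hy0.symm)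
    have hdich : (∀ z : Z, z ≠ rZ → f z = rY) ∨ (∀ z : Z, z ≠ rZ → f z = aY) := by
      by_contra hcon
      push_neg at hcon
      obtain ⟨⟨z1, hz1p, hz1⟩, ⟨z2, hz2p, hz2⟩⟩ := hcon
      have ht1 : Tendsto (fun i => (l ^ eZ (φ₂ i)) • z1) atTop (nhds rZ) := by
        rw [hZne]
        exact convSeq_tendsto hconvZ' hz1p
      have ht1' : Tendsto (fun i => (l ^ eZ (φ₂ i)) • f z1) atTop (nhds (f rZ)) := by
        have hcmp := (hf.tendsto rZ).comp ht1
        have heq : (f ∘ fun i => (l ^ eZ (φ₂ i)) • z1) = fun i => (l ^ eZ (φ₂ i)) • f z1 :=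
          funext fun i => hfe _ _
        rwa [heq] at hcmp
      have hfpa : f rZ = aY := tendsto_nhds_unique ht1' (convSeq_tendsto hconvY' hz1)
      have ht2 : Tendsto (fun i => (l ^ eZ (φ₂ i))⁻¹ • z2) atTop (nhds rZ) :=
        convSeq_tendsto_inv hconvZ' (by rw [← hZne]; exact hz2p)
      have ht2' : Tendsto (fun i => (l ^ eZ (φ₂ i))⁻¹ • f z2) atTop (nhds (f rZ)) := by
        have hcmp := (hf.tendsto rZ).comp ht2
        have heq : (f ∘ fun i => (l ^ eZ (φ₂ i))⁻¹ • z2) = fun i => (l ^ eZ (φ₂ i))⁻¹ • f z2 :=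
          funext fun i => hfe _ _
        rwa [heq] at hcmp
      have hfpr : f rZ = rY := tendsto_nhds_unique ht2' (convSeq_tendsto_inv hconvY' hz2)
      exact hrYaY (hfpr.symm.trans hfpa)
    have hgf : ∀ c0 : Y, (∀ z : Z, z ≠ rZ → f z = c0) → ∃ c : Y, ∀ gg : G, gg • c = c := by
      intro c0 hcst
      refine ⟨c0, fun gg => ?_⟩
      obtain ⟨z, hz⟩ : ∃ z : Z, z ∉ ({rZ, gg⁻¹ • rZ} : Set Z) :=
        exists_not_mem_of_finite ((Set.finite_singleton _).insert _)
      have hzp : z ≠ rZ := fun h => hz (by simp [h])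
      have hzgp : gg • z ≠ rZ := by
        intro h
        apply hz
        right
        rw [← h, inv_smul_smul]
        exact rfl
      have h1 : f (gg • z) = c0 := hcst _ hzgp
      rw [hfe, hcst z hzp] at h1
      exact h1
    rcases hdich with hcst | hcst
    · exact hgf _ hcst
    · exact hgf _ hcst
  · left
    exact ⟨hord, rZ, aZ, hZne, hfixZ⟩

end ConvLemmas7


/-- enumerating the loxodromic elements `lox k` of a geometrically
finite convergence action on `X` with their virtual normalizers `H k` (maximal
virtually cyclic over-subgroups), and given geometrically finite actions `Xs n`
whose peripheral structures are `𝓗(X)` together with the conjugates of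
`H 0, …, H n`, connected by equivariant continuous surjections, there is no
compact metrizable space with a non-elementary convergence action of `G`
receiving an equivariant continuous map from every `Xs n`. -/
theorem stmt18 {G : Type} [Group G] [Countable G] {X : Type}
    [MetricSpace X] [CompactSpace X] [MulAction G X]
    (hX : IsGeomFinite G X)
    (lox : ℕ → G) (hlox : ∀ k, IsLoxodromic G X (lox k))
    (hloxall : ∀ l : G, IsLoxodromic G X l → ∃ k, lox k = l)
    (H : ℕ → Subgroup G)
    (hHl : ∀ k, lox k ∈ H k)
    (hHvc : ∀ k, VirtuallyCyclic ↥(H k))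
    (hHmax : ∀ k, ∀ K : Subgroup G, lox k ∈ K → VirtuallyCyclic ↥K →
      H k ≤ K → K = H k)
    (Xs : ℕ → Type) [∀ n, MetricSpace (Xs n)] [∀ n, CompactSpace (Xs n)]
    [∀ n, MulAction G (Xs n)]
    (hXs : ∀ n, IsGeomFinite G (Xs n))
    (hperiph : ∀ n, periph G (Xs n) = periph G X ∪
      {P | ∃ k ≤ n, ∃ g : G, P = Subgroup.map (MulAut.conj g).toMonoidHom (H k)})
    (π0 : X → Xs 0) (hπ0c : Continuous π0) (hπ0s : Function.Surjective π0)
    (hπ0e : ∀ (g : G) (x : X), π0 (g • x) = g • π0 x)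
    (π : ∀ n, Xs n → Xs (n + 1))
    (hπc : ∀ n, Continuous (π n)) (hπs : ∀ n, Function.Surjective (π n))
    (hπe : ∀ n (g : G) (x : Xs n), π n (g • x) = g • π n x) :
    ∀ (Y : Type) [MetricSpace Y] [CompactSpace Y] [MulAction G Y],
      IsConvergenceAction G Y → (limitSet G Y).Infinite →
      ¬ (∀ n, ∃ f : Xs n → Y, Continuous f ∧
          ∀ (g : G) (x : Xs n), f (g • x) = g • f x) := by
  intro Y _ _ _ hYconv hYinf hmaps
  haveI := hYconv.1
  -- Step 1: find a convergence sequence with distinct repelling/attracting points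
  obtain ⟨w, r, a, hra, hcw⟩ := exists_conv_ne hYconv hYinf
  obtain ⟨z₀, hz₀⟩ : ∃ z₀ : Y, z₀ ∉ ({r, a} : Set Y) :=
    exists_not_mem_of_finite ((Set.finite_singleton _).insert _)
  have hz₀r : z₀ ≠ r := fun h => hz₀ (by simp [h])
  have hz₀a : z₀ ≠ a := fun h => hz₀ (by simp [h])
  set δ : ℝ := min (min (dist z₀ r) (dist z₀ a)) (dist r a) / 3 with hδdef
  have hδpos : 0 < δ := by
    apply div_pos _ (by norm_num)
    exact lt_min (lt_min (dist_pos.2 hz₀r) (dist_pos.2 hz₀a)) (dist_pos.2 hra)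
  have h3δ : 3 * δ = min (min (dist z₀ r) (dist z₀ a)) (dist r a) := by rw [hδdef]; ring
  -- Step 2: a loxodromic element of G with respect to Y
  obtain ⟨l, rY, aY, hord, hfixY, hneY, -, -⟩ := exists_lox hYconv hcw hδpos
    (by rw [h3δ]; exact min_le_right _ _)
    (by rw [h3δ]; exact le_trans (min_le_left _ _) (min_le_left _ _))
    (by rw [h3δ]; exact le_trans (min_le_left _ _) (min_le_right _ _))
  have hlY : IsLoxodromic G Y l := ⟨hord, rY, aY, hneY, hfixY⟩
  -- Step 3: pull back to X along f₀ ∘ π₀, so l is one of the enumerated loxodromics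
  obtain ⟨f0, hf0c, hf0e⟩ := hmaps 0
  rcases lox_pullback hX.1 hYconv (f0 ∘ π0) (hf0c.comp hπ0c)
      (fun gg x => by simp only [Function.comp_apply, hπ0e, hf0e]) hlY with
    hloxX | ⟨c, hc⟩
  swap
  · exact no_global_fix hYconv hYinf c hc
  obtain ⟨k, hk⟩ := hloxall l hloxX
  -- Step 4: pull back to Xs k
  obtain ⟨fk, hfkc, hfke⟩ := hmaps k
  rcases lox_pullback (hXs k).1 hYconv fk hfkc hfke hlY with hloxXk | ⟨c, hc⟩
  swap
  · exact no_global_fix hYconv hYinf c hc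
  -- Step 5: H k is maximal parabolic for Xs k, so lox k is not loxodromic there
  have hmem : H k ∈ periph G (Xs k) := by
    rw [hperiph k]
    right
    refine ⟨k, le_refl k, 1, ?_⟩
    have hconj1 : (MulAut.conj (1 : G)).toMonoidHom = MonoidHom.id G := by
      ext y
      simp
    rw [hconj1, Subgroup.map_id]
  have hpar : IsMaxParabolic G (Xs k) (H k) := hmem
  have hnl : ¬ IsLoxodromic G (Xs k) (lox k) := hpar.1.2.2 (lox k) (hHl k)
  rw [hk] at hnl
  exact hnl hloxXk
end

section
/- Let G be a countable group with minimal non-elementary convergence actions on compact metrizable spaces X and Y, and let π : X → Y be a G-equivariant continuous map. Then the map id_G ∪ π : G ∪ X → G ∪ Y between the associated compactifications of G is continuous. -/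
open Filter Topology Pointwise

/-- Any sequence with infinite range has an injective subsequence. -/
lemma exists_injective_subseq {α : Type*} (h : ℕ → α) (hinf : (Set.range h).Infinite) :
    ∃ φ : ℕ → ℕ, StrictMono φ ∧ Function.Injective (h ∘ φ) := by
  classical
  set p : ℕ → Prop := fun n => ∀ m < n, h m ≠ h n with hp
  have hSinf : (setOf p).Infinite := by
    by_contra hfin
    rw [Set.not_infinite] at hfin
    apply hinf
    refine Set.Finite.subset (hfin.image h) ?_
    rintro _ ⟨n, rfl⟩
    have hex : ∃ m, h m = h n := ⟨n, rfl⟩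
    refine ⟨Nat.find hex, ?_, Nat.find_spec hex⟩
    intro m hm hmn
    exact Nat.find_min hex hm (hmn.trans (Nat.find_spec hex))
  refine ⟨Nat.nth p, Nat.nth_strictMono hSinf, ?_⟩
  intro a b hab
  by_contra hne
  rcases Nat.lt_trichotomy a b with hlt | heq | hgt
  · exact Nat.nth_mem_of_infinite hSinf b _ (Nat.nth_strictMono hSinf hlt) hab
  · exact hne heq
  · exact Nat.nth_mem_of_infinite hSinf a _ (Nat.nth_strictMono hSinf hgt) hab.symm

/-- A convergent sequence with finite range attains its limit. -/
lemma mem_range_of_tendsto_of_finite {α : Type*} [TopologicalSpace α] [T1Space α]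
    {v : ℕ → α} {p : α} (hv : Tendsto v atTop (nhds p)) (hfin : (Set.range v).Finite) :
    p ∈ Set.range v :=
  hfin.isClosed.mem_of_tendsto hv (Eventually.of_forall fun n => ⟨n, rfl⟩)

/-- Key lemma: if an injective sequence in `G` converges to `x` in the compactification
`CX`, then it converges to `F x` in the compactification `CY`. -/
lemma keyB {G : Type} [Group G] {CX CY : Type}
    [MetricSpace CX] [CompactSpace CX] [MetricSpace CY] [CompactSpace CY]
    [MulAction G CX] [MulAction G CY]
    (hX : IsConvergenceAction G CX) (hY : IsConvergenceAction G CY)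
    (eX : G → CX) (eY : G → CY)
    (hXe : ∀ g h : G, eX (g * h) = g • eX h)
    (hYe : ∀ g h : G, eY (g * h) = g • eY h)
    (hXlim : limitSet G CX = (Set.range eX)ᶜ)
    (hYlim : limitSet G CY = (Set.range eY)ᶜ)
    (hXinf : ((Set.range eX)ᶜ : Set CX).Infinite)
    (hYinf : ((Set.range eY)ᶜ : Set CY).Infinite)
    (hYmin : ∀ y ∈ (Set.range eY)ᶜ,
      ((Set.range eY)ᶜ : Set CY) ⊆ closure {w : CY | ∃ g : G, w = g • y})
    (F : CX → CY)
    (hFmaps : ∀ c, c ∉ Set.range eX → F c ∉ Set.range eY)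
    (hFeq : ∀ (g : G) (c : CX), F (g • c) = g • F c)
    (hFcont : ContinuousOn F ((Set.range eX)ᶜ : Set CX))
    (g : ℕ → G) (hg : Function.Injective g) {x : CX}
    (hgx : Tendsto (fun n => eX (g n)) atTop (nhds x)) :
    Tendsto (fun n => eY (g n)) atTop (nhds (F x)) := by
  have hmemX : ∀ {k : ℕ → G} {r a : CX}, IsConvSeq G CX k r a →
      r ∉ Set.range eX ∧ a ∉ Set.range eX := by
    intro k r a hk
    have hr : r ∈ limitSet G CX := ⟨k, r, a, fun n => Subgroup.mem_top _, hk, Or.inl rfl⟩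
    have ha : a ∈ limitSet G CX := ⟨k, r, a, fun n => Subgroup.mem_top _, hk, Or.inr rfl⟩
    rw [hXlim] at hr ha
    exact ⟨hr, ha⟩
  have hmemY : ∀ {k : ℕ → G} {r a : CY}, IsConvSeq G CY k r a →
      r ∉ Set.range eY ∧ a ∉ Set.range eY := by
    intro k r a hk
    have hr : r ∈ limitSet G CY := ⟨k, r, a, fun n => Subgroup.mem_top _, hk, Or.inl rfl⟩
    have ha : a ∈ limitSet G CY := ⟨k, r, a, fun n => Subgroup.mem_top _, hk, Or.inr rfl⟩
    rw [hYlim] at hr ha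
    exact ⟨hr, ha⟩
  have hinv : ∀ (k : G) (c : CX), c ∉ Set.range eX → k • c ∉ Set.range eX := by
    rintro k c hc ⟨m, hm⟩
    exact hc ⟨k⁻¹ * m, by rw [hXe k⁻¹ m, hm, inv_smul_smul]⟩
  have hXone : ∀ k : G, k • eX 1 = eX k := fun k => by rw [← hXe k 1, mul_one]
  have hYone : ∀ k : G, k • eY 1 = eY k := fun k => by rw [← hYe k 1, mul_one]
  refine tendsto_of_subseq_tendsto fun ns hns => ?_
  obtain ⟨ψ, hψmono, hψ⟩ := strictMono_subseq_of_tendsto_atTop hns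
  set G1 : ℕ → G := fun n => g (ns (ψ n)) with hG1
  have hG1inj : Function.Injective G1 := fun a b hab => hψ.injective (hg hab)
  obtain ⟨φ₂, r, a, hφ₂, hcs⟩ := hX.2.2 G1 hG1inj
  obtain ⟨φ₃, r', a', hφ₃, hcs'⟩ := hY.2.2 (G1 ∘ φ₂) hcs.1
  have hra := hmemX hcs
  have hra' := hmemY hcs'
  -- the sequence converges to `a` in `CX`
  have h1 : Tendsto (fun n => eX (G1 (φ₂ n))) atTop (nhds a) := by
    have := (hcs.2.1 {eX 1} isCompact_singleton
      (by simp only [Set.mem_singleton_iff]; exact fun h => hra.1 (h ▸ ⟨1, rfl⟩))).tendsto_at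
      (Set.mem_singleton (eX 1))
    simpa only [hXone, Function.comp_apply] using this
  have h2 : Tendsto (fun n => eX (G1 (φ₂ n))) atTop (nhds x) := by
    have : Tendsto (fun n => ns (ψ (φ₂ n))) atTop atTop :=
      ((hψ.comp hφ₂).tendsto_atTop)
    exact hgx.comp this
  have hxa : x = a := tendsto_nhds_unique h2 h1
  -- the sequence converges to `a'` in `CY`
  have h3 : Tendsto (fun n => eY (G1 (φ₂ (φ₃ n)))) atTop (nhds a') := by
    have := (hcs'.2.1 {eY 1} isCompact_singleton
      (by simp only [Set.mem_singleton_iff]; exact fun h => hra'.1 (h ▸ ⟨1, rfl⟩))).tendsto_at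
      (Set.mem_singleton (eY 1))
    simpa only [hYone, Function.comp_apply] using this
  -- find a limit point `c` with `c ≠ r` and `F c ≠ r'`
  obtain ⟨c, hc, hcr, hcr'⟩ : ∃ c, c ∉ Set.range eX ∧ c ≠ r ∧ F c ≠ r' := by
    by_contra hcon
    push_neg at hcon
    have horb : ∀ k : G, k • r' = r' := by
      intro k
      obtain ⟨c, hcmem⟩ := (hXinf.diff (Set.toFinite {r, k⁻¹ • r})).nonempty
      have hc1 : c ∉ Set.range eX := hcmem.1
      have hcr : c ≠ r := fun h => hcmem.2 (by simp [h])
      have hckr : c ≠ k⁻¹ • r := fun h => hcmem.2 (by simp [h])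
      have e1 : F c = r' := hcon c hc1 hcr
      have e2 : F (k • c) = r' := hcon _ (hinv k c hc1)
        (fun h => hckr (by rw [← h, inv_smul_smul]))
      rw [hFeq, e1] at e2
      exact e2
    have hsub : ((Set.range eY)ᶜ : Set CY) ⊆ {r'} := by
      refine (hYmin r' hra'.1).trans ?_
      have hss : {w : CY | ∃ k : G, w = k • r'} ⊆ {r'} := by
        rintro w ⟨k, rfl⟩
        simp [horb k]
      calc closure {w : CY | ∃ k : G, w = k • r'} ⊆ closure {r'} := closure_mono hss
        _ = {r'} := closure_singleton
    exact ((Set.finite_singleton r').subset hsub).not_infinite hYinf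
  -- `g_n • c → a` in `CX`
  have h4 : Tendsto (fun n => G1 (φ₂ (φ₃ n)) • c) atTop (nhds a) := by
    have hbase : Tendsto (fun n => G1 (φ₂ n) • c) atTop (nhds a) :=
      (hcs.2.1 {c} isCompact_singleton
        (by simp only [Set.mem_singleton_iff]; exact fun h => hcr h.symm)).tendsto_at rfl
    exact hbase.comp hφ₃.tendsto_atTop
  -- apply `F` using continuity on the limit set
  have h5 : Tendsto (fun n => F (G1 (φ₂ (φ₃ n)) • c)) atTop (nhds (F a)) := by
    have hamem : a ∈ ((Set.range eX)ᶜ : Set CX) := hra.2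
    refine Filter.Tendsto.comp (hFcont a hamem) (tendsto_nhdsWithin_iff.mpr ⟨h4, ?_⟩)
    exact Eventually.of_forall fun n => hinv _ _ hc
  have h6 : (fun n => F (G1 (φ₂ (φ₃ n)) • c)) = fun n => G1 (φ₂ (φ₃ n)) • F c :=
    funext fun n => hFeq _ _
  have h7 : Tendsto (fun n => G1 (φ₂ (φ₃ n)) • F c) atTop (nhds a') :=
    (hcs'.2.1 {F c} isCompact_singleton
      (by simp only [Set.mem_singleton_iff]; exact fun h => hcr' h.symm)).tendsto_at rfl
  have hFa : F a = a' := tendsto_nhds_unique (h6 ▸ h5) h7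
  refine ⟨fun n => ψ (φ₂ (φ₃ n)), ?_⟩
  have hgoal : F x = a' := by rw [hxa, hFa]
  rw [hgoal]
  exact h3

/-- with `CX = G ∪ X` and `CY = G ∪ Y` the compactifications of `G`
associated to minimal non-elementary convergence actions (the limit sets being
the complements of the images of `G`), any map `F = id_G ∪ π` extending the
identity of `G` and restricting to a continuous equivariant map `π` between the
limit sets is continuous. -/
theorem stmt19 {G : Type} [Group G] [Countable G] {CX CY : Type}
    [MetricSpace CX] [CompactSpace CX] [MetricSpace CY] [CompactSpace CY]
    [MulAction G CX] [MulAction G CY]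
    (hX : IsConvergenceAction G CX) (hY : IsConvergenceAction G CY)
    (eX : G → CX) (eY : G → CY)
    (hXd : DenseRange eX) (hYd : DenseRange eY)
    (hXi : Function.Injective eX) (hYi : Function.Injective eY)
    (hXe : ∀ g h : G, eX (g * h) = g • eX h)
    (hYe : ∀ g h : G, eY (g * h) = g • eY h)
    (hXdisc : DiscreteTopology ↥(Set.range eX))
    (hYdisc : DiscreteTopology ↥(Set.range eY))
    (hXlim : limitSet G CX = (Set.range eX)ᶜ)
    (hYlim : limitSet G CY = (Set.range eY)ᶜ)
    (hXinf : ((Set.range eX)ᶜ : Set CX).Infinite)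
    (hYinf : ((Set.range eY)ᶜ : Set CY).Infinite)
    (hXmin : ∀ x ∈ (Set.range eX)ᶜ,
      ((Set.range eX)ᶜ : Set CX) ⊆ closure {y : CX | ∃ g : G, y = g • x})
    (hYmin : ∀ y ∈ (Set.range eY)ᶜ,
      ((Set.range eY)ᶜ : Set CY) ⊆ closure {w : CY | ∃ g : G, w = g • y})
    (F : CX → CY) (hFe : ∀ g : G, F (eX g) = eY g)
    (hFmaps : ∀ c, c ∉ Set.range eX → F c ∉ Set.range eY)
    (hFeq : ∀ (g : G) (c : CX), F (g • c) = g • F c)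
    (hFcont : ContinuousOn F ((Set.range eX)ᶜ : Set CX)) :
    Continuous F := by
  -- each point of `range eX` has an open neighborhood meeting `range eX` only in itself
  have hU : ∀ g0 : G, ∃ U : Set CX, IsOpen U ∧ eX g0 ∈ U ∧ U ∩ Set.range eX = {eX g0} := by
    intro g0
    have h1 : IsOpen ({⟨eX g0, Set.mem_range_self g0⟩} : Set (Set.range eX)) :=
      isOpen_discrete _
    obtain ⟨U, hUo, hUeq⟩ := isOpen_induced_iff.mp h1
    have hmem : eX g0 ∈ U := by
      have : (⟨eX g0, Set.mem_range_self g0⟩ : Set.range eX) ∈ Subtype.val ⁻¹' U := by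
        rw [hUeq]; rfl
      exact this
    refine ⟨U, hUo, hmem, ?_⟩
    ext y
    constructor
    · rintro ⟨hyU, hyR⟩
      have : (⟨y, hyR⟩ : Set.range eX) ∈ Subtype.val ⁻¹' U := hyU
      rw [hUeq] at this
      exact Set.mem_singleton_iff.mpr (congrArg Subtype.val this)
    · rintro rfl
      exact ⟨hmem, Set.mem_range_self g0⟩
  -- `range eX` is open
  have hopen : IsOpen (Set.range eX) := by
    rw [← isClosed_compl_iff, ← closure_subset_iff_isClosed]
    intro q hq
    by_contra hqr
    obtain ⟨g0, rfl⟩ := Set.not_notMem.mp hqr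
    obtain ⟨U, hUo, hUm, hUeq⟩ := hU g0
    obtain ⟨ε, hε, hball⟩ := Metric.isOpen_iff.mp hUo _ hUm
    obtain ⟨p, hp, hpd⟩ := Metric.mem_closure_iff.mp hq (ε / 2) (by linarith)
    have hpq : p ≠ eX g0 := fun h => hp (h ▸ Set.mem_range_self g0)
    have hdpos : 0 < dist (eX g0) p := by
      rw [dist_pos]; exact fun h => hpq h.symm
    obtain ⟨y, hy, hyd⟩ := Metric.mem_closure_iff.mp (hXd p)
      (min (dist (eX g0) p) (ε - dist (eX g0) p)) (lt_min hdpos (by linarith))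
    have hyU : y ∈ U := by
      apply hball
      rw [Metric.mem_ball, dist_comm]
      calc dist (eX g0) y ≤ dist (eX g0) p + dist p y := dist_triangle _ _ _
        _ < dist (eX g0) p + (ε - dist (eX g0) p) := by
            have := hyd.trans_le (min_le_right _ _)
            linarith [hyd.trans_le (min_le_right _ _)]
        _ = ε := by ring
    have hyeq : y = eX g0 := by
      have : y ∈ U ∩ Set.range eX := ⟨hyU, hy⟩
      rwa [hUeq] at this
    have : dist p y < dist (eX g0) p := hyd.trans_le (min_le_left _ _)
    rw [hyeq, dist_comm] at this
    exact lt_irrefl _ this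
  rw [continuous_iff_continuousAt]
  intro x0
  by_cases hx0 : x0 ∈ Set.range eX
  · -- isolated point: continuity is trivial
    obtain ⟨g0, rfl⟩ := hx0
    obtain ⟨U, hUo, hUm, hUeq⟩ := hU g0
    have hsing : IsOpen ({eX g0} : Set CX) := hUeq ▸ hUo.inter hopen
    rw [ContinuousAt, (isOpen_singleton_iff_nhds_eq_pure _).mp hsing]
    exact tendsto_pure_nhds F (eX g0)
  · -- limit point
    rw [ContinuousAt, tendsto_iff_seq_tendsto]
    intro u hu
    refine tendsto_of_subseq_tendsto fun ns hns => ?_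
    have huns : Tendsto (fun n => u (ns n)) atTop (nhds x0) := hu.comp hns
    by_cases hfreq : ∃ᶠ n in atTop, u (ns n) ∈ Set.range eX
    · obtain ⟨φ, hφ, hφP⟩ := extraction_of_frequently_atTop hfreq
      choose h hh using hφP
      have hhx : Tendsto (fun n => eX (h n)) atTop (nhds x0) := by
        have := huns.comp hφ.tendsto_atTop
        refine this.congr fun n => ?_
        exact (hh n).symm
      have hrange : (Set.range h).Infinite := by
        by_contra hfin
        rw [Set.not_infinite] at hfin
        have hfin2 : (Set.range fun n => eX (h n)).Finite := by
          refine (hfin.image eX).subset ?_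
          rintro _ ⟨n, rfl⟩
          exact ⟨h n, ⟨n, rfl⟩, rfl⟩
        obtain ⟨n, hn⟩ := mem_range_of_tendsto_of_finite hhx hfin2
        exact hx0 ⟨h n, hn⟩
      obtain ⟨σ, hσ, hσinj⟩ := exists_injective_subseq h hrange
      have hkey := keyB hX hY eX eY hXe hYe hXlim hYlim hXinf hYinf hYmin F hFmaps hFeq
        hFcont (h ∘ σ) hσinj (hhx.comp hσ.tendsto_atTop)
      refine ⟨fun n => φ (σ n), ?_⟩
      refine hkey.congr fun n => ?_
      simp only [Function.comp_apply]
      rw [← hh (σ n), hFe]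
    · rw [Filter.not_frequently] at hfreq
      obtain ⟨N, hN⟩ := Filter.eventually_atTop.mp hfreq
      refine ⟨fun n => n + N, ?_⟩
      have hx0c : x0 ∈ ((Set.range eX)ᶜ : Set CX) := hx0
      have htd : Tendsto (fun n => u (ns (n + N))) atTop (nhds x0) :=
        huns.comp (tendsto_atTop_mono (fun n => Nat.le_add_right n N) tendsto_id)
      refine Filter.Tendsto.comp (hFcont x0 hx0c) (tendsto_nhdsWithin_iff.mpr ⟨htd, ?_⟩)
      exact Eventually.of_forall fun n => hN (n + N) (Nat.le_add_left N n)
end
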